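/- arXiv:1704.02107 — 2 statements merged into one kernel-verified Lean document; each statement's English description precedes it below -/
import Mathlib

section
/- Let x be a clustered graph signal of the form x[i] = Σ_l a_l·1_{C_l}[i] for the partition F, whose coefficients satisfy |a_l − a_{l'}| > η for all l ≠ l' with some η > 0, and let w := min_{{i,j}∈E} W[i,j] > 0 be the minimum edge weight. If a graph signal x̂ satisfies ‖x̂ − x‖_TV < w·η/2, then the set S := { {i,j} ∈ E : |x̂[i] − x̂[j]| ≥ η/2 } coincides exactly with the boundary ∂F of the partition F. -/
open Finset

variable {V ι : Type*}

/-- Sum of `W i j * |x i − x j|` over a symmetric set `S` of directed edges,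
counting each undirected edge `{i,j}` exactly once (hence the division by 2). -/
noncomputable def edgeNorm (W : V → V → ℝ) (S : Finset (V × V)) (x : V → ℝ) : ℝ :=
  (∑ p ∈ S, W p.1 p.2 * |x p.1 - x p.2|) / 2

/-- The neighbourhood `N(i)` of a node `i`. -/
def nbhd [Fintype V] [DecidableEq V] (E : Finset (V × V)) (i : V) : Finset V :=
  Finset.univ.filter fun j => (i, j) ∈ E

/-- The demand induced by the flow `h` at node `i`:
`d[i] = Σ_{j ∈ N(i)} (h(j,i) − h(i,j))`. -/
noncomputable def demand [Fintype V] [DecidableEq V] (E : Finset (V × V))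
    (h : V → V → ℝ) (i : V) : ℝ :=
  ∑ j ∈ nbhd E i, (h j i - h i j)

/-- The boundary `∂F` of the partition with cluster assignment `cl`:
edges whose endpoints lie in different clusters. -/
def bdry [DecidableEq V] [DecidableEq ι] (E : Finset (V × V)) (cl : V → ι) :
    Finset (V × V) :=
  E.filter fun p => cl p.1 ≠ cl p.2

/-- The nodes `B(F)` incident to at least one boundary edge. -/
def bdryNodes [Fintype V] [DecidableEq V] [DecidableEq ι] (E : Finset (V × V))
    (cl : V → ι) : Finset V :=
  Finset.univ.filter fun i => ∃ j, (i, j) ∈ bdry E cl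

/-- The sampling set `M` resolves the partition `cl` with constants `K, L`:
for every choice of bits `b` on the boundary edges (one bit per undirected
boundary edge, encoded by `b (j,i) = !b (i,j)`), there is a flow `h` obeying
the capacity constraints on intra-cluster edges, carrying flow `L·W[i,j]` in
the direction selected by the bit on every boundary edge, and whose demands
satisfy `|d[i]| ≤ K` on `M` and `d[i] = 0` off `M`. -/
def Resolves [Fintype V] [DecidableEq V] [DecidableEq ι] (E : Finset (V × V))
    (W : V → V → ℝ) (cl : V → ι) (M : Finset V) (K L : ℝ) : Prop :=
  ∀ b : V × V → Bool, (∀ p ∈ bdry E cl, b (p.2, p.1) = !b p) →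
    ∃ h : V → V → ℝ,
      (∀ p ∈ E \ bdry E cl, |h p.1 p.2| ≤ W p.1 p.2) ∧
      (∀ p ∈ bdry E cl, h p.1 p.2 = (if b p then (1 : ℝ) else 0) * (L * W p.1 p.2)) ∧
      (∀ i ∈ M, |demand E h i| ≤ K) ∧
      (∀ i, i ∉ M → demand E h i = 0)

/-- If the cluster coefficients are `η`-separated and
`‖x̂ − x‖_TV < w·η/2` with `w` the minimum edge weight, then the set
`S = { {i,j} ∈ E : |x̂[i] − x̂[j]| ≥ η/2 }` coincides with the boundary `∂F`. -/
theorem boundary_identification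
    [Fintype V] [DecidableEq V] [DecidableEq ι]
    (E : Finset (V × V)) (W : V → V → ℝ)
    (hEsymm : ∀ i j : V, (i, j) ∈ E → (j, i) ∈ E)
    (hEirr : ∀ i : V, (i, i) ∉ E)
    (hWsymm : ∀ i j : V, W i j = W j i)
    (hWpos : ∀ p ∈ E, 0 < W p.1 p.2)
    (hWzero : ∀ i j : V, (i, j) ∉ E → W i j = 0)
    (cl : V → ι) (a : ι → ℝ) (x : V → ℝ) (hx : ∀ i, x i = a (cl i))
    (η : ℝ) (hη : 0 < η) (ha : ∀ l l' : ι, l ≠ l' → η < |a l - a l'|)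
    (hEne : E.Nonempty)
    (xhat : V → ℝ)
    (herr : edgeNorm W E (fun i => xhat i - x i) <
      (E.inf' hEne fun p => W p.1 p.2) * η / 2) :
    E.filter (fun p => η / 2 ≤ |xhat p.1 - xhat p.2|) = bdry E cl := by
  classical
  set w := E.inf' hEne fun p => W p.1 p.2 with hw
  set δ := fun i => xhat i - x i with hδ
  have hterm : ∀ p ∈ E, W p.1 p.2 * |δ p.1 - δ p.2| ≤ edgeNorm W E δ := by
    intro p hp
    have hne : p.1 ≠ p.2 := by
      intro h
      apply hEirr p.1
      have : p = (p.1, p.1) := by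
        rw [Prod.ext_iff]; exact ⟨rfl, h.symm⟩
      rwa [this] at hp
    have hps : (p.2, p.1) ∈ E := hEsymm _ _ hp
    have hsub : ({p, (p.2, p.1)} : Finset (V × V)) ⊆ E := by
      intro q hq
      simp only [Finset.mem_insert, Finset.mem_singleton] at hq
      rcases hq with h | h <;> subst h <;> assumption
    have hnonneg : ∀ q ∈ E, 0 ≤ W q.1 q.2 * |δ q.1 - δ q.2| :=
      fun q hq => mul_nonneg (hWpos q hq).le (abs_nonneg _)
    have hsum : ∑ q ∈ ({p, (p.2, p.1)} : Finset (V × V)), W q.1 q.2 * |δ q.1 - δ q.2|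
        ≤ ∑ q ∈ E, W q.1 q.2 * |δ q.1 - δ q.2| :=
      Finset.sum_le_sum_of_subset_of_nonneg hsub (fun q hq _ => hnonneg q hq)
    have hnepair : p ≠ (p.2, p.1) := by
      intro h
      apply hne
      rw [Prod.ext_iff] at h
      exact h.1
    rw [Finset.sum_pair hnepair] at hsum
    have heq : W (p.2, p.1).1 (p.2, p.1).2 * |δ (p.2, p.1).1 - δ (p.2, p.1).2|
        = W p.1 p.2 * |δ p.1 - δ p.2| := by
      simp only [hWsymm p.2 p.1, abs_sub_comm (δ p.2) (δ p.1)]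
    rw [heq] at hsum
    unfold edgeNorm
    linarith
  have hδsmall : ∀ p ∈ E, |δ p.1 - δ p.2| < η / 2 := by
    intro p hp
    have h1 := (hterm p hp).trans_lt herr
    have hwle : w ≤ W p.1 p.2 := Finset.inf'_le _ hp
    have hWp : 0 < W p.1 p.2 := hWpos p hp
    nlinarith [abs_nonneg (δ p.1 - δ p.2)]
  ext p
  simp only [Finset.mem_filter, bdry, ne_eq]
  constructor
  · rintro ⟨hp, hle⟩
    refine ⟨hp, ?_⟩
    intro hcl
    have hxeq : x p.1 = x p.2 := by rw [hx, hx, hcl]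
    have : xhat p.1 - xhat p.2 = δ p.1 - δ p.2 := by simp [hδ]; linarith
    rw [this] at hle
    exact absurd hle (not_le.mpr (hδsmall p hp))
  · rintro ⟨hp, hcl⟩
    refine ⟨hp, ?_⟩
    have hbig : η < |x p.1 - x p.2| := by
      rw [hx, hx]; exact ha _ _ hcl
    have hds := hδsmall p hp
    have htri : |x p.1 - x p.2| ≤ |xhat p.1 - xhat p.2| + |δ p.1 - δ p.2| := by
      have : x p.1 - x p.2 = (xhat p.1 - xhat p.2) - (δ p.1 - δ p.2) := by
        simp [hδ]; ring
      rw [this]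
      exact abs_sub _ _
    linarith
end

section
/- Let x be a clustered graph signal of the form x[i] = Σ_l a_l·1_{C_l}[i] for the partition F, with noisy samples y[i] = x[i] + e[i] on a sampling set M ⊆ V, and let x̂ be any minimizer of the network Lasso objective Σ_{i∈M} |x̃[i] − y[i]| + λ·‖x̃‖_TV with λ > 0. Then, writing x̃ := x̂ − x, the inequality Σ_{i∈M} |x̂[i] − y[i]| + λ·‖x̃‖_{E∖∂F} ≤ λ·‖x̃‖_{∂F} + Σ_{i∈M} |e[i]| holds. -/
open Finset

variable {V ι : Type*}

/-! Comparing the objective at `x̂` with its value at the true signal `x`: the fidelity term of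
`x` is `Σ_{i∈M} |e[i]|`, and `x` has no variation inside clusters. Inside clusters `x̂ − x`
therefore varies exactly as `x̂`, while on the boundary the triangle inequality gives
`‖x‖_{∂F} ≤ ‖x̂‖_{∂F} + ‖x̂ − x‖_{∂F}`; cancelling `λ‖x̂‖_{∂F}` yields the claim. -/

section EdgeNorm

variable (W : V → V → ℝ)

@[simp]
lemma edgeNorm_zero (S : Finset (V × V)) : edgeNorm W S 0 = 0 := by
  simp [edgeNorm]

lemma edgeNorm_sdiff_add [DecidableEq V] {S T : Finset (V × V)} (hST : S ⊆ T) (z : V → ℝ) :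
    edgeNorm W T z = edgeNorm W (T \ S) z + edgeNorm W S z := by
  simp only [edgeNorm, ← Finset.sum_sdiff hST, add_div]

lemma edgeNorm_add_of_forall_eq {S : Finset (V × V)} {c : V → ℝ}
    (hc : ∀ p ∈ S, c p.1 = c p.2) (z : V → ℝ) :
    edgeNorm W S (z + c) = edgeNorm W S z := by
  unfold edgeNorm
  congr 1
  refine Finset.sum_congr rfl fun p hp => ?_
  simp only [Pi.add_apply, hc p hp, add_sub_add_right_eq_sub]

lemma edgeNorm_eq_zero_of_forall_eq {S : Finset (V × V)} {c : V → ℝ}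
    (hc : ∀ p ∈ S, c p.1 = c p.2) : edgeNorm W S c = 0 := by
  simpa using edgeNorm_add_of_forall_eq W hc 0

lemma edgeNorm_sub_le {S : Finset (V × V)} (hW : ∀ p ∈ S, 0 ≤ W p.1 p.2) (u v : V → ℝ) :
    edgeNorm W S (u - v) ≤ edgeNorm W S u + edgeNorm W S v := by
  unfold edgeNorm
  rw [← add_div, ← Finset.sum_add_distrib]
  gcongr with p hp
  rw [← mul_add]
  refine mul_le_mul_of_nonneg_left ?_ (hW p hp)
  calc |(u - v) p.1 - (u - v) p.2| = |(u p.1 - u p.2) - (v p.1 - v p.2)| := by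
        simp only [Pi.sub_apply]; ring_nf
    _ ≤ |u p.1 - u p.2| + |v p.1 - v p.2| := abs_sub _ _

end EdgeNorm

lemma bdry_subset [DecidableEq V] [DecidableEq ι] (E : Finset (V × V)) (cl : V → ι) :
    bdry E cl ⊆ E :=
  Finset.filter_subset _ _

lemma eq_of_mem_sdiff_bdry [DecidableEq V] [DecidableEq ι] {E : Finset (V × V)} {cl : V → ι}
    {a : ι → ℝ} {x : V → ℝ} (hx : ∀ i, x i = a (cl i)) :
    ∀ p ∈ E \ bdry E cl, x p.1 = x p.2 := by
  intro p hp
  simp only [Finset.mem_sdiff, bdry, Finset.mem_filter, not_and, not_not] at hp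
  rw [hx, hx, hp.2 hp.1]

lemma sum_abs_sub_eq_sum_abs_noise {M : Finset V} {x e y : V → ℝ}
    (hy : ∀ i ∈ M, y i = x i + e i) : ∑ i ∈ M, |x i - y i| = ∑ i ∈ M, |e i| :=
  Finset.sum_congr rfl fun i hi => by rw [hy i hi, sub_add_cancel_left, abs_neg]

theorem minimizer_boundary_inequality_general
    [DecidableEq V] [DecidableEq ι]
    (E : Finset (V × V)) (W : V → V → ℝ)
    (hWpos : ∀ p ∈ E, 0 < W p.1 p.2)
    (cl : V → ι) (a : ι → ℝ) (x : V → ℝ) (hx : ∀ i, x i = a (cl i))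
    (M : Finset V) (e y : V → ℝ) (hy : ∀ i ∈ M, y i = x i + e i)
    (lam : ℝ) (hlam : 0 < lam)
    (xhat : V → ℝ)
    (hmin : ∀ z : V → ℝ,
      (∑ i ∈ M, |xhat i - y i|) + lam * edgeNorm W E xhat ≤
        (∑ i ∈ M, |z i - y i|) + lam * edgeNorm W E z) :
    (∑ i ∈ M, |xhat i - y i|) +
        lam * edgeNorm W (E \ bdry E cl) (fun i => xhat i - x i) ≤
      lam * edgeNorm W (bdry E cl) (fun i => xhat i - x i) +
        ∑ i ∈ M, |e i| := by
  have hconst := eq_of_mem_sdiff_bdry (E := E) hx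
  have hinner : edgeNorm W (E \ bdry E cl) xhat = edgeNorm W (E \ bdry E cl) (xhat - x) := by
    simpa using edgeNorm_add_of_forall_eq W hconst (xhat - x)
  have hbdry : edgeNorm W (bdry E cl) x ≤
      edgeNorm W (bdry E cl) xhat + edgeNorm W (bdry E cl) (xhat - x) := by
    simpa using edgeNorm_sub_le W (fun p hp => (hWpos p (bdry_subset E cl hp)).le) xhat (xhat - x)
  have hcompare := hmin x
  rw [sum_abs_sub_eq_sum_abs_noise hy, edgeNorm_sdiff_add W (bdry_subset E cl),
    edgeNorm_sdiff_add W (bdry_subset E cl) x, edgeNorm_eq_zero_of_forall_eq W hconst,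
    hinner] at hcompare
  have := mul_le_mul_of_nonneg_left hbdry hlam.le
  change _ + lam * edgeNorm W _ (xhat - x) ≤ lam * edgeNorm W _ (xhat - x) + _
  linarith

/-- For a clustered signal `x` and any nLasso minimizer `x̂`,
writing `x̃ = x̂ − x`, one has
`Σ_{i∈M}|x̂[i]−y[i]| + λ‖x̃‖_{E∖∂F} ≤ λ‖x̃‖_{∂F} + Σ_{i∈M}|e[i]|`. -/
theorem minimizer_boundary_inequality
    [Fintype V] [DecidableEq V] [DecidableEq ι]
    (E : Finset (V × V)) (W : V → V → ℝ)
    (hEsymm : ∀ i j : V, (i, j) ∈ E → (j, i) ∈ E)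
    (hEirr : ∀ i : V, (i, i) ∉ E)
    (hWsymm : ∀ i j : V, W i j = W j i)
    (hWpos : ∀ p ∈ E, 0 < W p.1 p.2)
    (hWzero : ∀ i j : V, (i, j) ∉ E → W i j = 0)
    (cl : V → ι) (a : ι → ℝ) (x : V → ℝ) (hx : ∀ i, x i = a (cl i))
    (M : Finset V) (e y : V → ℝ) (hy : ∀ i ∈ M, y i = x i + e i)
    (lam : ℝ) (hlam : 0 < lam)
    (xhat : V → ℝ)
    (hmin : ∀ z : V → ℝ,
      (∑ i ∈ M, |xhat i - y i|) + lam * edgeNorm W E xhat ≤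
        (∑ i ∈ M, |z i - y i|) + lam * edgeNorm W E z) :
    (∑ i ∈ M, |xhat i - y i|) +
        lam * edgeNorm W (E \ bdry E cl) (fun i => xhat i - x i) ≤
      lam * edgeNorm W (bdry E cl) (fun i => xhat i - x i) +
        ∑ i ∈ M, |e i| :=
  minimizer_boundary_inequality_general E W hWpos cl a x hx M e y hy lam hlam xhat hmin
end
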